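/- Projection onto a quadratic equality constraint defined by a rank-one unit-norm form: let a ∈ ℂ^M with ‖a‖ = 1, A = a a^H, Z ∈ ℂ^{M×U} with a^H Z ≠ 0, and η > 0. Then V = (I − (μ/(1+μ)) A) Z with μ = ‖a^H Z‖/√η − 1 satisfies ‖a^H V‖² = η, and V minimizes ‖V − Z‖²_F subject to ‖a^H V‖²_F = η. -/

import Mathlib

/-!
Write `c = a^H Z`, `s = ‖c‖` and `t = 1 - √η / s`, so that `μ / (1 + μ) = t`. Then
`V = Z - t a c`, hence `a^H V = (√η / s) c` has norm `√η`, and `‖V - Z‖_F = |t| s = |s - √η|`.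
For any feasible `X`, Cauchy–Schwarz in each column and the reverse triangle inequality give
`‖X - Z‖_F ≥ ‖a^H X - a^H Z‖ ≥ |‖a^H X‖ - ‖a^H Z‖| = |√η - s|`.
-/

open Matrix

section RankOne
variable {𝕜 m n : Type*} [RCLike 𝕜] [Fintype m]

theorem sq_sqrt_sum_norm_sq_sub_le [Fintype n] (c d : n → 𝕜) :
    (√(∑ j, ‖d j‖ ^ 2) - √(∑ j, ‖c j‖ ^ 2)) ^ 2 ≤ ∑ j, ‖d j - c j‖ ^ 2 := by
  have h := abs_norm_sub_norm_le (WithLp.toLp 2 d : EuclideanSpace 𝕜 n) (WithLp.toLp 2 c)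
  rw [← WithLp.toLp_sub] at h
  simp only [EuclideanSpace.norm_eq] at h
  calc _ = |√(∑ j, ‖d j‖ ^ 2) - √(∑ j, ‖c j‖ ^ 2)| ^ 2 := (sq_abs _).symm
    _ ≤ √(∑ j, ‖(d - c) j‖ ^ 2) ^ 2 := by gcongr
    _ = ∑ j, ‖d j - c j‖ ^ 2 := Real.sq_sqrt (by positivity)

theorem sum_norm_vecMul_sq_le [Fintype n] (a : m → 𝕜) (W : Matrix m n 𝕜) :
    ∑ j, ‖(star a ᵥ* W) j‖ ^ 2 ≤ (∑ i, ‖a i‖ ^ 2) * ∑ i, ∑ j, ‖W i j‖ ^ 2 := by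
  have column (j : n) : ‖(star a ᵥ* W) j‖ ^ 2 ≤ (∑ i, ‖a i‖ ^ 2) * ∑ i, ‖W i j‖ ^ 2 := by
    have h := norm_inner_le_norm (𝕜 := 𝕜) (WithLp.toLp 2 a : EuclideanSpace 𝕜 m)
      (WithLp.toLp 2 (fun i => W i j))
    rw [EuclideanSpace.inner_toLp_toLp, dotProduct_comm] at h
    calc _ ≤ (‖WithLp.toLp 2 a‖ * ‖WithLp.toLp 2 fun i => W i j‖) ^ 2 := by gcongr; exact h
      _ = _ := by rw [mul_pow, EuclideanSpace.norm_sq_eq, EuclideanSpace.norm_sq_eq]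
  calc _ ≤ ∑ j, (∑ i, ‖a i‖ ^ 2) * ∑ i, ‖W i j‖ ^ 2 := Finset.sum_le_sum fun j _ => column j
    _ = _ := by rw [← Finset.mul_sum, Finset.sum_comm]

theorem sum_norm_smul_sq [Fintype n] (r : ℝ) (c : n → 𝕜) :
    ∑ j, ‖(r • c) j‖ ^ 2 = r ^ 2 * ∑ j, ‖c j‖ ^ 2 := by
  simp only [Pi.smul_apply, norm_smul, Real.norm_eq_abs, mul_pow, sq_abs, Finset.mul_sum]

theorem sum_sum_norm_vecMulVec_sq [Fintype n] (a : m → 𝕜) (b : n → 𝕜) :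
    ∑ i, ∑ j, ‖vecMulVec a b i j‖ ^ 2 = (∑ i, ‖a i‖ ^ 2) * ∑ j, ‖b j‖ ^ 2 := by
  simp only [vecMulVec_apply, norm_mul, mul_pow, Finset.sum_mul_sum]

theorem star_dotProduct_self_eq_sum_norm_sq (a : m → 𝕜) :
    star a ⬝ᵥ a = ((∑ i, ‖a i‖ ^ 2 : ℝ) : 𝕜) := by
  simp [dotProduct, RCLike.conj_mul]

theorem one_sub_smul_vecMulVec_mul [DecidableEq m] (a b : m → 𝕜) (t : ℝ) (Z : Matrix m n 𝕜) :
    (1 - t • vecMulVec a b) * Z = Z - t • vecMulVec a (b ᵥ* Z) := by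
  rw [Matrix.sub_mul, Matrix.one_mul, Matrix.smul_mul, vecMulVec_mul]

theorem vecMul_sub_smul_vecMulVec {a : m → 𝕜} (ha : star a ⬝ᵥ a = 1) (t : ℝ) (Z : Matrix m n 𝕜) :
    star a ᵥ* (Z - t • vecMulVec a (star a ᵥ* Z)) = (1 - t) • (star a ᵥ* Z) := by
  rw [Matrix.vecMul_sub, Matrix.vecMul_smul, vecMul_vecMulVec, ha, one_smul, sub_smul, one_smul]

end RankOne

/-- Projection onto the rank-one quadratic equality constraint:
`V = (I − (μ/(1+μ)) a a^H) Z` with `μ = ‖a^H Z‖/√η − 1` satisfies `‖a^H V‖² = η`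
and minimizes `‖V − Z‖²_F` subject to that constraint. -/
theorem stmt10 (M U : ℕ) (a : Fin M → ℂ) (ha : ∑ i, ‖a i‖ ^ 2 = 1)
    (Z : Matrix (Fin M) (Fin U) ℂ) (η : ℝ) (hη : 0 < η)
    (aH : Matrix (Fin M) (Fin U) ℂ → Fin U → ℂ)
    (haH : ∀ X j, aH X j = ∑ i, (starRingEnd ℂ) (a i) * X i j)
    (hZ : aH Z ≠ 0)
    (μ : ℝ)
    (hμ : μ = Real.sqrt (∑ j, ‖aH Z j‖ ^ 2) / Real.sqrt η - 1)
    (V : Matrix (Fin M) (Fin U) ℂ)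
    (hV : V = (1 - ((μ / (1 + μ) : ℝ)) • Matrix.vecMulVec a (star a)) * Z) :
    (∑ j, ‖aH V j‖ ^ 2 = η) ∧
    (∀ X : Matrix (Fin M) (Fin U) ℂ, (∑ j, ‖aH X j‖ ^ 2 = η) →
      (∑ i, ∑ j, ‖(V - Z) i j‖ ^ 2) ≤
        ∑ i, ∑ j, ‖(X - Z) i j‖ ^ 2) := by
  obtain rfl : aH = fun X => star a ᵥ* X := funext fun X => funext (haH X)
  beta_reduce at hZ ⊢
  set c := star a ᵥ* Z
  set s := √(∑ j, ‖c j‖ ^ 2)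
  have hs : 0 < s := Real.sqrt_pos.mpr <| by
    obtain ⟨j, hj⟩ := Function.ne_iff.mp hZ
    exact Finset.sum_pos' (fun _ _ => by positivity) ⟨j, Finset.mem_univ j, by positivity⟩
  have hs2 : s ^ 2 = ∑ j, ‖c j‖ ^ 2 := Real.sq_sqrt (by positivity)
  have hsη : 0 < √η := Real.sqrt_pos.mpr hη
  have ht : μ / (1 + μ) = 1 - √η / s := by
    rw [hμ]; field_simp [hs.ne']; ring
  have ha' : star a ⬝ᵥ a = 1 := by
    rw [star_dotProduct_self_eq_sum_norm_sq, ha, RCLike.ofReal_one]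
  rw [ht, one_sub_smul_vecMulVec_mul] at hV
  subst hV
  refine ⟨?_, fun X hX => ?_⟩
  · rw [vecMul_sub_smul_vecMulVec ha', sub_sub_cancel, sum_norm_smul_sq, ← hs2, div_pow,
      Real.sq_sqrt hη.le, div_mul_cancel₀ _ (by positivity)]
  · calc ∑ i, ∑ j, ‖(Z - (1 - √η / s) • vecMulVec a c - Z) i j‖ ^ 2
        = (√(∑ j, ‖(star a ᵥ* X) j‖ ^ 2) - s) ^ 2 := by
          simp only [sub_sub_cancel_left, Matrix.neg_apply, norm_neg, Matrix.smul_apply, norm_smul,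
            mul_pow, ← Finset.mul_sum, sum_sum_norm_vecMulVec_sq, ha, one_mul, ← hs2,
            Real.norm_eq_abs, sq_abs, hX]
          field_simp
          ring
      _ ≤ ∑ j, ‖(star a ᵥ* X) j - c j‖ ^ 2 := sq_sqrt_sum_norm_sq_sub_le _ _
      _ = ∑ j, ‖(star a ᵥ* (X - Z)) j‖ ^ 2 := by rw [Matrix.vecMul_sub]; rfl
      _ ≤ ∑ i, ∑ j, ‖(X - Z) i j‖ ^ 2 := by
          simpa only [ha, one_mul] using sum_norm_vecMul_sq_le a (X - Z)
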